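/- Let Γ be a bounded Borel subset of ℝ^d with |Γ| > 0 such that |∂_r(Γ)| = O(r) as r ↓ 0. Then m_λ(Γ) − λ|Γ| = O(λ^{(d−1)/d}) as λ → ∞; that is, there exist constants C ∈ (0,∞) and λ_0 ≥ 1 such that for all λ ≥ λ_0, |m_λ(Γ) − λ|Γ|| ≤ C λ^{(d−1)/d}. -/

import Mathlib

open MeasureTheory Metric Set Pointwise

noncomputable section

/-- The closed axis-aligned unit cube `x + [-1/2,1/2]^d` in `ℝ^d` (with the sup norm,
this is the closed ball of radius `1/2` around `x`). -/
def unitCube {d : ℕ} (x : Fin d → ℝ) : Set (Fin d → ℝ) :=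
  Metric.closedBall x (1 / 2)

/-- `∂_r(B)`: the set of points within `ℓ_∞`-distance `r` of the topological boundary of `B`
(distance to the empty set being `+∞`). -/
def bdryNbhd {d : ℕ} (r : ℝ) (B : Set (Fin d → ℝ)) : Set (Fin d → ℝ) :=
  {x | EMetric.infEdist x (frontier B) ≤ ENNReal.ofReal r}

/-- The dilation `λ^{1/d} B`. -/
def dilate {d : ℕ} (lam : ℝ) (B : Set (Fin d → ℝ)) : Set (Fin d → ℝ) :=
  (lam ^ (1 / (d : ℝ))) • B

/-- `W_λ(B)`: the lattice points whose unit cube is contained in `λ^{1/d} B`. -/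
def Wlat {d : ℕ} (lam : ℝ) (B : Set (Fin d → ℝ)) : Set (Fin d → ℤ) :=
  {w | unitCube (fun i => (w i : ℝ)) ⊆ dilate lam B}

/-- `m_λ(B)`: the number of cubes in the packing of `λ^{1/d} B`. -/
def mlat {d : ℕ} (lam : ℝ) (B : Set (Fin d → ℝ)) : ℕ :=
  (Wlat lam B).ncard

open scoped ENNReal

/-!
Integer-centred unit cubes have pairwise disjoint interiors, so at most `|D|` of them fit into
`D`. Conversely, a point `x ∈ D` at sup-distance more than `1` from `∂D` lies in the cube centred
at its coordinatewise rounding; that cube sits in the closed ball of radius `1` about `x`, which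
is connected and misses `∂D`, hence lies in `D`. So `D` is covered by the packed cubes and
`∂_1(D)`, and `|m - |D|| ≤ |∂_1(D)|`. For `D = λ^{1/d} Γ` we have
`∂_1(D) = λ^{1/d} ∂_{λ^{-1/d}}(Γ)`, whose volume is `λ |∂_{λ^{-1/d}}(Γ)| = O(λ^{(d-1)/d})`.
-/

theorem frontier_smul₀ {G₀ E : Type*} [GroupWithZero G₀] [MulAction G₀ E] [TopologicalSpace E]
    [ContinuousConstSMul G₀ E] {c : G₀} (hc : c ≠ 0) (s : Set E) :
    frontier (c • s) = c • frontier s :=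
  ((Homeomorph.smulOfNeZero c hc).image_frontier s).symm

theorem cthickening_smul₀ {𝕜 E : Type*} [NormedDivisionRing 𝕜] [SeminormedAddCommGroup E]
    [Module 𝕜 E] [NormSMulClass 𝕜 E] {c : 𝕜} (hc : c ≠ 0) (r : ℝ) (s : Set E) :
    cthickening (‖c‖ * r) (c • s) = c • cthickening r s := by
  ext x
  obtain ⟨y, rfl⟩ : ∃ y, c • y = x := ⟨c⁻¹ • x, smul_inv_smul₀ hc x⟩
  rw [smul_mem_smul_set_iff₀ hc, mem_cthickening_iff, mem_cthickening_iff, infEDist_smul₀ hc,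
    ENNReal.ofReal_mul (norm_nonneg c), ofReal_norm, ENNReal.smul_def, smul_eq_mul]
  exact ENNReal.mul_le_mul_iff_right (by simpa using hc) (by simp)

theorem bdryNbhd_smul {d : ℕ} {c : ℝ} (hc : 0 < c) (r : ℝ) (B : Set (Fin d → ℝ)) :
    bdryNbhd (c * r) (c • B) = c • bdryNbhd r B := by
  have := cthickening_smul₀ hc.ne' r (frontier B)
  rwa [Real.norm_of_nonneg hc.le, ← frontier_smul₀ hc.ne'] at this

theorem closedBall_subset_of_notMem_cthickening_frontier {E : Type*} [NormedAddCommGroup E]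
    [NormedSpace ℝ E] {s : Set E} {x : E} {r : ℝ} (hx : x ∈ s)
    (hxr : x ∉ cthickening r (frontier s)) : closedBall x r ⊆ s := by
  obtain hr | hr := lt_or_ge r 0
  · simp [closedBall_eq_empty.2 hr]
  have hfr : ∀ y ∈ closedBall x r, y ∉ frontier s := fun y hy hys =>
    hxr (mem_cthickening_of_dist_le x y r _ hys (by rwa [dist_comm, ← mem_closedBall]))
  have hxi : x ∈ interior s := by
    by_contra h
    exact hfr x (mem_closedBall_self hr) ⟨subset_closure hx, h⟩
  refine ((convex_closedBall x r).isPreconnected.subset_of_closure_inter_subset isOpen_interior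
    ⟨x, mem_closedBall_self hr, hxi⟩ ?_).trans interior_subset
  rintro y ⟨hyc, hyb⟩
  by_contra h
  exact hfr y hyb ⟨closure_mono interior_subset hyc, h⟩

theorem isometry_intCast_pi (d : ℕ) : Isometry (fun (w : Fin d → ℤ) i => (w i : ℝ)) :=
  Isometry.piMap _ fun _ => Real.isometry_intCast

theorem finite_setOf_intCast_mem {d : ℕ} {D : Set (Fin d → ℝ)} (hD : Bornology.IsBounded D) :
    {w : Fin d → ℤ | (fun i => (w i : ℝ)) ∈ D}.Finite :=
  ((isometry_intCast_pi d).antilipschitz.isBounded_preimage hD).isCompact_closure.finite_of_discrete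
    |>.subset subset_closure

theorem pairwiseDisjoint_ball_intCast (d : ℕ) :
    (univ : Set (Fin d → ℤ)).PairwiseDisjoint fun w => ball (fun i => (w i : ℝ)) (1 / 2) := by
  intro a _ b _ hab
  apply ball_disjoint_ball
  obtain ⟨i, hi⟩ := Function.ne_iff.mp hab
  have : (1 : ℝ) ≤ dist (a i) (b i) := by
    rw [Int.dist_eq]; exact_mod_cast Int.one_le_abs (sub_ne_zero.mpr hi)
  rw [(isometry_intCast_pi d).dist_eq]
  linarith [dist_le_pi_dist a b i]

theorem volume_unitCube {d : ℕ} (x : Fin d → ℝ) : volume (unitCube x) = 1 := by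
  rw [unitCube, Real.volume_pi_closedBall _ (by norm_num)]
  norm_num

theorem mem_unitCube_round {d : ℕ} (x : Fin d → ℝ) : x ∈ unitCube (fun i => (round (x i) : ℝ)) := by
  rw [unitCube, mem_closedBall, dist_pi_le_iff (by norm_num)]
  exact fun i => abs_sub_round (x i)

def cubesInside {d : ℕ} (D : Set (Fin d → ℝ)) : Set (Fin d → ℤ) :=
  {w | unitCube (fun i => (w i : ℝ)) ⊆ D}

theorem finite_cubesInside {d : ℕ} {D : Set (Fin d → ℝ)} (hD : Bornology.IsBounded D) :
    (cubesInside D).Finite :=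
  (finite_setOf_intCast_mem hD).subset fun _ hw => hw (mem_closedBall_self (by norm_num))

theorem round_mem_cubesInside {d : ℕ} {D : Set (Fin d → ℝ)} {x : Fin d → ℝ} (hx : x ∈ D)
    (hxD : x ∉ bdryNbhd 1 D) : (fun i => round (x i)) ∈ cubesInside D := by
  refine subset_trans ?_ (closedBall_subset_of_notMem_cthickening_frontier hx hxD)
  apply closedBall_subset_closedBall'
  have := mem_unitCube_round x
  rw [unitCube, mem_closedBall, dist_comm] at this
  linarith

theorem ncard_cubesInside_le_volume {d : ℕ} (D : Set (Fin d → ℝ)) :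
    ((cubesInside D).ncard : ℝ≥0∞) ≤ volume D := by
  by_cases hfin : (cubesInside D).Finite
  swap
  · simp [Set.Infinite.ncard hfin]
  calc ((cubesInside D).ncard : ℝ≥0∞)
      = ∑ w ∈ hfin.toFinset, volume (ball (fun i => (w i : ℝ)) (1 / 2)) := by
        simp [Set.ncard_eq_toFinset_card _ hfin]
    _ = volume (⋃ w ∈ hfin.toFinset, ball (fun i => (w i : ℝ)) (1 / 2)) :=
        (measure_biUnion_finset ((pairwiseDisjoint_ball_intCast d).subset (subset_univ _))
          fun _ _ => measurableSet_ball).symm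
    _ ≤ volume D := measure_mono <| iUnion₂_subset fun w hw =>
        ball_subset_closedBall.trans (hfin.mem_toFinset.mp hw)

theorem volume_le_ncard_cubesInside_add {d : ℕ} {D : Set (Fin d → ℝ)} (hD : Bornology.IsBounded D) :
    volume D ≤ (cubesInside D).ncard + volume (bdryNbhd 1 D) := by
  have hfin := finite_cubesInside hD
  have hcover : D ⊆ (⋃ w ∈ hfin.toFinset, unitCube (fun i => (w i : ℝ))) ∪ bdryNbhd 1 D := by
    intro x hx
    by_cases hxD : x ∈ bdryNbhd 1 D
    · exact Or.inr hxD
    · exact Or.inl (mem_biUnion (hfin.mem_toFinset.mpr (round_mem_cubesInside hx hxD))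
        (mem_unitCube_round x))
  calc volume D
      ≤ volume (⋃ w ∈ hfin.toFinset, unitCube (fun i => (w i : ℝ))) + volume (bdryNbhd 1 D) :=
        (measure_mono hcover).trans (measure_union_le _ _)
    _ ≤ (∑ w ∈ hfin.toFinset, volume (unitCube (fun i => (w i : ℝ)))) + volume (bdryNbhd 1 D) := by
        gcongr; exact measure_biUnion_finset_le _ _
    _ = (cubesInside D).ncard + volume (bdryNbhd 1 D) := by
        simp [volume_unitCube, Set.ncard_eq_toFinset_card _ hfin]

theorem isBounded_bdryNbhd {d : ℕ} {B : Set (Fin d → ℝ)} (hB : Bornology.IsBounded B) (r : ℝ) :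
    Bornology.IsBounded (bdryNbhd r B) :=
  (hB.closure.subset frontier_subset_closure).cthickening

theorem abs_ncard_cubesInside_sub_volume_le {d : ℕ} {D : Set (Fin d → ℝ)}
    (hD : Bornology.IsBounded D) :
    |((cubesInside D).ncard : ℝ) - (volume D).toReal| ≤ (volume (bdryNbhd 1 D)).toReal := by
  have hV := hD.measure_lt_top (μ := volume).ne
  have hB := (isBounded_bdryNbhd hD 1).measure_lt_top (μ := volume).ne
  have hlow := ENNReal.toReal_mono hV (ncard_cubesInside_le_volume D)
  have hup := ENNReal.toReal_mono (ENNReal.add_ne_top.mpr ⟨by simp, hB⟩)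
    (volume_le_ncard_cubesInside_add hD)
  rw [ENNReal.toReal_add (by simp) hB, ENNReal.toReal_natCast] at hup
  rw [ENNReal.toReal_natCast] at hlow
  rw [abs_sub_le_iff]
  constructor <;> linarith [ENNReal.toReal_nonneg (a := volume (bdryNbhd 1 D))]

theorem volume_dilate {d : ℕ} (hd : d ≠ 0) {lam : ℝ} (hlam : 0 ≤ lam) (S : Set (Fin d → ℝ)) :
    volume (dilate lam S) = ENNReal.ofReal lam * volume S := by
  rw [dilate, Measure.addHaar_smul_of_nonneg _ (by positivity), Module.finrank_fin_fun, one_div,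
    Real.rpow_inv_natCast_pow hlam hd]

theorem abs_mlat_sub_le {d : ℕ} (hd : d ≠ 0) {B : Set (Fin d → ℝ)} (hB : Bornology.IsBounded B)
    {lam : ℝ} (hlam : 0 < lam) :
    |(mlat lam B : ℝ) - lam * (volume B).toReal| ≤
      lam * (volume (bdryNbhd (lam ^ (1 / (d : ℝ)))⁻¹ B)).toReal := by
  have ht : 0 < lam ^ (1 / (d : ℝ)) := by positivity
  have hvol (S : Set (Fin d → ℝ)) : (volume (dilate lam S)).toReal = lam * (volume S).toReal := by
    rw [volume_dilate hd hlam.le, ENNReal.toReal_mul, ENNReal.toReal_ofReal hlam.le]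
  have hbdry : bdryNbhd 1 (dilate lam B) = dilate lam (bdryNbhd (lam ^ (1 / (d : ℝ)))⁻¹ B) := by
    rw [dilate, dilate, ← bdryNbhd_smul ht, mul_inv_cancel₀ ht.ne']
  have key := abs_ncard_cubesInside_sub_volume_le (D := dilate lam B) (hB.smul₀ _)
  rwa [hbdry, hvol, hvol] at key

theorem packing_count_asymptotics_general (d : ℕ) (hd : 1 ≤ d)
    (Γ : Set (Fin d → ℝ)) (hbdd : Bornology.IsBounded Γ)
    (hreg : ∃ C₀ r₀ : ℝ, 0 < C₀ ∧ 0 < r₀ ∧ ∀ r : ℝ, 0 < r → r ≤ r₀ →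
      (volume (bdryNbhd r Γ)).toReal ≤ C₀ * r) :
    ∃ C : ℝ, 0 < C ∧ ∃ lam₀ : ℝ, 1 ≤ lam₀ ∧ ∀ lam : ℝ, lam₀ ≤ lam →
      |(mlat lam Γ : ℝ) - lam * (volume Γ).toReal| ≤ C * lam ^ (((d : ℝ) - 1) / d) := by
  obtain ⟨C₀, r₀, hC₀, hr₀, hreg⟩ := hreg
  refine ⟨C₀, hC₀, max 1 (r₀⁻¹ ^ d), le_max_left _ _, fun lam hlam => ?_⟩
  have hlam0 : 0 < lam := one_pos.trans_le ((le_max_left _ _).trans hlam)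
  set t := lam ^ (1 / (d : ℝ))
  have ht : 0 < t := by positivity
  have htd : t ^ d = lam := by
    simpa only [t, one_div] using Real.rpow_inv_natCast_pow hlam0.le (by omega : d ≠ 0)
  have htr : t⁻¹ ≤ r₀ := by
    rw [inv_le_comm₀ ht hr₀, ← pow_le_pow_iff_left₀ (by positivity) ht.le (by omega : d ≠ 0), htd]
    exact (le_max_right _ _).trans hlam
  have hexp : lam ^ (((d : ℝ) - 1) / d) = lam * t⁻¹ := by
    rw [sub_div, div_self (by positivity), Real.rpow_sub hlam0, Real.rpow_one, div_eq_mul_inv]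
  calc |(mlat lam Γ : ℝ) - lam * (volume Γ).toReal|
      ≤ lam * (volume (bdryNbhd t⁻¹ Γ)).toReal := abs_mlat_sub_le (by omega) hbdd hlam0
    _ ≤ lam * (C₀ * t⁻¹) := by gcongr; exact hreg _ (by positivity) htr
    _ = C₀ * lam ^ (((d : ℝ) - 1) / d) := by rw [hexp]; ring

theorem packing_count_asymptotics (d : ℕ) (hd : 1 ≤ d)
    (Γ : Set (Fin d → ℝ)) (hbdd : Bornology.IsBounded Γ) (hmeas : MeasurableSet Γ)
    (hpos : 0 < volume Γ)
    (hreg : ∃ C₀ r₀ : ℝ, 0 < C₀ ∧ 0 < r₀ ∧ ∀ r : ℝ, 0 < r → r ≤ r₀ →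
      (volume (bdryNbhd r Γ)).toReal ≤ C₀ * r) :
    ∃ C : ℝ, 0 < C ∧ ∃ lam₀ : ℝ, 1 ≤ lam₀ ∧ ∀ lam : ℝ, lam₀ ≤ lam →
      |(mlat lam Γ : ℝ) - lam * (volume Γ).toReal| ≤ C * lam ^ (((d : ℝ) - 1) / d) :=
  packing_count_asymptotics_general d hd Γ hbdd hreg
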